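/- Every finite-order element of Homeo₊(S¹) is conjugate in Homeo₊(S¹) to a rotation. -/

import Mathlib

/-- The circle `S¹ = ℝ/ℤ`. -/
abbrev S1 := AddCircle (1 : ℝ)

/-- `F : ℝ → ℝ` is a lift of `f` through the covering `ℝ → ℝ/ℤ`, witnessing that `f`
is an orientation-preserving homeomorphism of the circle. -/
def IsLiftOf (f : Equiv.Perm S1) (F : ℝ → ℝ) : Prop :=
  StrictMono F ∧ Continuous F ∧ (∀ x : ℝ, F (x + 1) = F x + 1) ∧
    ∀ x : ℝ, f ((x : ℝ) : S1) = ((F x : ℝ) : S1)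

/-- `f` is an orientation-preserving homeomorphism of the circle. -/
def IsPosHomeo (f : Equiv.Perm S1) : Prop := ∃ F, IsLiftOf f F

/-- `ρ` is the translation number of the lift `F`. -/
def HasRotLim (F : ℝ → ℝ) (ρ : ℝ) : Prop :=
  Filter.Tendsto (fun n : ℕ => F^[n] 0 / n) Filter.atTop (nhds ρ)

/-- `G` contains a non-abelian free subgroup (one isomorphic to the free group of rank 2). -/
def HasFreeSubgroup (G : Subgroup (Equiv.Perm S1)) : Prop :=
  ∃ φ : FreeGroup (Fin 2) →* Equiv.Perm S1, Function.Injective φ ∧ ∀ w, φ w ∈ G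

/-! If `f ^ k = 1` and `F` lifts `f`, then `F^[k] - id` is a continuous integer-valued function,
hence `F^[k] = id + m` for some `m : ℤ`. Put `α = m / k` and average the orbit:
`G x = (∑ i < k, (F^[i] x - i α)) / k`. Then `G` is again a strictly increasing continuous lift
commuting with `· + 1`, and `G ∘ F = G + α` because the sum telescopes (`F^[k] x - k α = x`).
So `G` descends to a homeomorphism of the circle conjugating `f` to the rotation by `α`. -/

open Finset Function

lemma AddCircle.coe_eq_coe_iff_exists_intCast {x y : ℝ} :
    (x : AddCircle (1 : ℝ)) = y ↔ ∃ n : ℤ, y = x + n := by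
  rw [QuotientAddGroup.eq, AddSubgroup.mem_zmultiples_iff]
  simp only [zsmul_eq_mul, mul_one]
  constructor
  · rintro ⟨n, hn⟩; exact ⟨n, by linarith⟩
  · rintro ⟨n, rfl⟩; exact ⟨n, by ring⟩

lemma PreconnectedSpace.eq_of_forall_mem_range_intCast {X : Type*} [TopologicalSpace X]
    [PreconnectedSpace X] {d : X → ℝ} (hd : Continuous d)
    (hint : ∀ x, d x ∈ Set.range ((↑) : ℤ → ℝ)) (x y : X) : d x = d y := by
  choose n hn using hint
  obtain rfl : d = (↑) ∘ n := funext fun x => (hn x).symm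
  exact congrArg Int.cast <| PreconnectedSpace.constant ‹_›
    (Int.isClosedEmbedding_coe_real.isEmbedding.continuous_iff.mpr hd)

lemma OrderIso.exists_isLiftOf (H : ℝ ≃o ℝ) (hH : ∀ x, H (x + 1) = H x + 1) :
    ∃ h, IsLiftOf h H := by
  have hHn : ∀ x (n : ℤ), H (x + n) = H x + n :=
    AddConstMapClass.map_add_int (⟨H, hH⟩ : AddConstMap ℝ ℝ 1 1)
  refine ⟨Quotient.congr H.toEquiv fun a b => ?_, H.strictMono, H.continuous, hH, fun _ => rfl⟩
  rw [QuotientAddGroup.leftRel_apply, QuotientAddGroup.leftRel_apply, ← QuotientAddGroup.eq,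
    ← QuotientAddGroup.eq]
  simp only [AddCircle.coe_eq_coe_iff_exists_intCast]
  constructor
  · rintro ⟨n, rfl⟩; exact ⟨n, hHn a n⟩
  · rintro ⟨n, hn⟩; exact ⟨n, H.injective (hn.trans (hHn a n).symm)⟩

lemma IsLiftOf.pow_apply_coe {f : Equiv.Perm S1} {F : ℝ → ℝ} (hF : IsLiftOf f F) (n : ℕ)
    (x : ℝ) : (f ^ n) x = (F^[n] x : S1) := by
  rw [Equiv.Perm.coe_pow]
  exact ((Semiconj.iterate_right (fun x => (hF.2.2.2 x).symm) n) x).symm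

lemma IsLiftOf.exists_iterate_eq_add_intCast {f : Equiv.Perm S1} {F : ℝ → ℝ}
    (hF : IsLiftOf f F) {k : ℕ} (hk : f ^ k = 1) : ∃ m : ℤ, ∀ x, F^[k] x = x + m := by
  have hint : ∀ x, F^[k] x - x ∈ Set.range ((↑) : ℤ → ℝ) := fun x => by
    obtain ⟨n, hn⟩ := AddCircle.coe_eq_coe_iff_exists_intCast.mp <|
      (hF.pow_apply_coe k x).symm.trans (by rw [hk]; rfl)
    exact ⟨-n, by push_cast; linarith⟩
  obtain ⟨m, hm⟩ := hint 0
  refine ⟨m, fun x => ?_⟩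
  have hconst := PreconnectedSpace.eq_of_forall_mem_range_intCast
    ((hF.2.1.iterate k).sub continuous_id) hint x 0
  simp only [Pi.sub_apply, id_eq] at hconst hm
  linarith

lemma IsLiftOf.conj_eq_addLeft {f h : Equiv.Perm S1} {F : ℝ → ℝ} {H : ℝ ≃o ℝ}
    (hF : IsLiftOf f F) (hH : IsLiftOf h H.symm) {α : ℝ} (hconj : Semiconj H F (· + α)) :
    h⁻¹ * f * h = Equiv.addLeft (α : S1) := by
  ext y
  obtain ⟨z, rfl⟩ := QuotientAddGroup.mk_surjective y
  have hFH : F (H.symm z) = H.symm (z + α) := by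
    rw [H.eq_symm_apply, hconj, H.apply_symm_apply]
  rw [Equiv.Perm.mul_apply, Equiv.Perm.mul_apply, hH.2.2.2, hF.2.2.2, hFH,
    Equiv.Perm.inv_eq_iff_eq, ← hH.2.2.2]
  exact congrArg h (add_comm (z : S1) (α : S1))

noncomputable def averagedLift (F : ℝ → ℝ) (k : ℕ) (α x : ℝ) : ℝ :=
  (∑ i ∈ range k, (F^[i] x - i * α)) / k

section averagedLift

variable {F : ℝ → ℝ} {k : ℕ} {α : ℝ}

lemma strictMono_averagedLift (hF : StrictMono F) (hk : k ≠ 0) :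
    StrictMono (averagedLift F k α) := fun x y hxy => by
  refine div_lt_div_of_pos_right (sum_lt_sum (fun i _ => ?_) ?_) (by positivity)
  · exact sub_le_sub_right ((hF.iterate i).monotone hxy.le) _
  · exact ⟨0, mem_range.mpr (Nat.pos_of_ne_zero hk), by simpa using hxy⟩

lemma continuous_averagedLift (hF : Continuous F) : Continuous (averagedLift F k α) :=
  (continuous_finsetSum _ fun i _ => (hF.iterate i).sub continuous_const).div_const _

lemma averagedLift_add_one (hF : ∀ x, F (x + 1) = F x + 1) (hk : k ≠ 0) (x : ℝ) :
    averagedLift F k α (x + 1) = averagedLift F k α x + 1 := by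
  have hFi : ∀ i, F^[i] (x + 1) = F^[i] x + 1 := fun i =>
    (Commute.iterate_left (f := F) (g := (· + 1)) hF i) x
  simp only [averagedLift, hFi, add_sub_right_comm _ (1 : ℝ), sum_add_distrib, sum_const,
    card_range, nsmul_one]
  rw [add_div, div_self (Nat.cast_ne_zero.mpr hk)]

lemma semiconj_averagedLift (hk : k ≠ 0) (hFk : ∀ x, F^[k] x = x + k * α) :
    Semiconj (averagedLift F k α) F (· + α) := fun x => by
  set u : ℕ → ℝ := fun i => F^[i] x - i * α
  have hu : u k = u 0 := by simp [u, hFk]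
  have hshift : ∑ i ∈ range k, (F^[i] (F x) - i * α) = ∑ i ∈ range k, u i + k * α := by
    have htel := sum_range_succ' u k
    rw [sum_range_succ, hu] at htel
    have hsucc : ∀ i, F^[i] (F x) - i * α = u (i + 1) + α := fun i => by
      simp only [u, ← iterate_succ_apply]; push_cast; ring
    simp only [hsucc, sum_add_distrib, sum_const, card_range, nsmul_eq_mul]
    linarith
  rw [averagedLift, hshift, add_div, mul_div_cancel_left₀ _ (Nat.cast_ne_zero.mpr hk)]
  rfl

end averagedLift

theorem stmt9 (f : Equiv.Perm S1) (hf : IsPosHomeo f)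
    (hord : ∃ k : ℕ, 0 < k ∧ f ^ k = 1) :
    ∃ (h : Equiv.Perm S1) (α : S1), IsPosHomeo h ∧
      h⁻¹ * f * h = Equiv.addLeft α := by
  obtain ⟨F, hF⟩ := hf
  obtain ⟨k, hk_pos, hfk⟩ := hord
  have hk : k ≠ 0 := hk_pos.ne'
  obtain ⟨m, hm⟩ := hF.exists_iterate_eq_add_intCast hfk
  set α : ℝ := m / k
  have hFk : ∀ x, F^[k] x = x + k * α := fun x => by
    rw [hm, mul_div_cancel₀ _ (Nat.cast_ne_zero.mpr hk)]
  set G := averagedLift F k α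
  have hGp : ∀ x, G (x + 1) = G x + 1 := averagedLift_add_one hF.2.2.1 hk
  have hGm : StrictMono G := strictMono_averagedLift hF.1 hk
  let H : ℝ ≃o ℝ := hGm.orderIsoOfSurjective G <| (CircleDeg1Lift.continuous_iff_surjective
    ⟨⟨G, hGm.monotone⟩, hGp⟩).mp (continuous_averagedLift hF.2.1)
  obtain ⟨h, hh⟩ := H.symm.exists_isLiftOf fun x => H.symm_apply_eq.mpr <|
    ((hGp _).trans (congrArg (· + 1) (H.apply_symm_apply x))).symm
  exact ⟨h, α, ⟨_, hh⟩, hF.conj_eq_addLeft hh (semiconj_averagedLift hk hFk)⟩
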